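/- arXiv:1003.5078 — 4 statements merged into one kernel-verified Lean document; each statement's English description precedes it below -/
import Mathlib

section
/- Let K be a field, I a finite set, and for each i ∈ I let Γ_i be a finite group with group algebra E_i = K[Γ_i]. For each pair (i,j) ∈ I × I let A_{ij} be a finite-dimensional K-vector space equipped with a left E_i-module structure and a right E_j-module structure whose actions commute, and assume each A_{ij} is free of finite rank as a left E_i-module and free of finite rank as a right E_j-module (a 'locally free group species'). Define the integer matrix B = (b_{ij}) by b_{ij} = (rank of A_{ji} as a left E_j-module) − (rank of A_{ij} as a right E_j-module). Then for all i, j ∈ I one has |Γ_j| · b_{ij} = − |Γ_i| · b_{ji}; in particular B is skew-symmetrizable with symmetrizer given by the group orders (|Γ_i|)_{i ∈ I}. -/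
open Module

/-
Over a finite-dimensional algebra `E` over `K`, a free `E`-module `M` satisfies the tower law
`dim_K M = dim_K E · rank_E M`. Applied to `E = K[Γ]` and to `E = K[Γ]ᵐᵒᵖ`, both of dimension `|Γ|`,
it computes `dim_K A_ij` once as `|Γ_i|` times the left rank and once as `|Γ_j|` times the right
rank; the identity `|Γ_j| b_ij = -|Γ_i| b_ji` is a linear combination of these four equations.
-/

section TowerLaw

variable (K E M : Type*) [Field K] [Ring E] [Nontrivial E] [Algebra K E] [FiniteDimensional K E]
  [AddCommGroup M] [Module K M] [Module E M] [IsScalarTower K E M] [Module.Free E M]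

theorem finrank_mul_finrank_of_finiteDimensional :
    finrank K E * finrank E M = finrank K M :=
  -- a nontrivial Noetherian ring has the strong rank condition, needed by the tower law
  have : IsNoetherianRing E := isNoetherian_of_tower K inferInstance
  finrank_mul_finrank K E M

end TowerLaw

namespace MonoidAlgebra

variable (K G M : Type*) [Field K] [Fintype G]

theorem finrank_eq_card : finrank K (MonoidAlgebra K G) = Fintype.card G :=
  finrank_eq_card_basis (basis G K)

variable [Monoid G] [AddCommGroup M] [Module K M]

theorem card_mul_finrank [Module (MonoidAlgebra K G) M] [IsScalarTower K (MonoidAlgebra K G) M]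
    [Module.Free (MonoidAlgebra K G) M] :
    Fintype.card G * finrank (MonoidAlgebra K G) M = finrank K M := by
  rw [← finrank_eq_card K G, finrank_mul_finrank_of_finiteDimensional]

theorem card_mul_finrank_op [Module (MonoidAlgebra K G)ᵐᵒᵖ M]
    [IsScalarTower K (MonoidAlgebra K G)ᵐᵒᵖ M] [Module.Free (MonoidAlgebra K G)ᵐᵒᵖ M] :
    Fintype.card G * finrank (MonoidAlgebra K G)ᵐᵒᵖ M = finrank K M := by
  rw [← finrank_eq_card K G, ← MulOpposite.finrank, finrank_mul_finrank_of_finiteDimensional]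

end MonoidAlgebra

theorem exchangeMatrix_skew_symmetrizable_general
    (K : Type*) [Field K] (I : Type*)
    (Γ : I → Type*) [∀ i, Group (Γ i)] [∀ i, Fintype (Γ i)]
    -- the bimodules of arrows: finite-dimensional `K`-vector spaces
    (A : I → I → Type*) [∀ i j, AddCommGroup (A i j)] [∀ i j, Module K (A i j)]
    -- left `K[Γ i]`-module structure and right `K[Γ j]`-module structure
    [∀ i j, Module (MonoidAlgebra K (Γ i)) (A i j)]
    [∀ i j, Module (MonoidAlgebra K (Γ j))ᵐᵒᵖ (A i j)]
    [∀ i j, IsScalarTower K (MonoidAlgebra K (Γ i)) (A i j)]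
    [∀ i j, IsScalarTower K (MonoidAlgebra K (Γ j))ᵐᵒᵖ (A i j)]
    -- local freeness: each `A i j` is free of finite rank on both sides
    [∀ i j, Module.Free (MonoidAlgebra K (Γ i)) (A i j)]
    [∀ i j, Module.Free (MonoidAlgebra K (Γ j))ᵐᵒᵖ (A i j)]
    -- the exchange matrix
    (B : I → I → ℤ)
    (hB : ∀ i j, B i j = (finrank (MonoidAlgebra K (Γ j)) (A j i) : ℤ)
        - (finrank (MonoidAlgebra K (Γ j))ᵐᵒᵖ (A i j) : ℤ)) :
    ∀ i j, (Fintype.card (Γ j) : ℤ) * B i j = -((Fintype.card (Γ i) : ℤ) * B j i) := by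
  intro i j
  have left_ji := MonoidAlgebra.card_mul_finrank K (Γ j) (A j i)
  have right_ij := MonoidAlgebra.card_mul_finrank_op K (Γ j) (A i j)
  have left_ij := MonoidAlgebra.card_mul_finrank K (Γ i) (A i j)
  have right_ji := MonoidAlgebra.card_mul_finrank_op K (Γ i) (A j i)
  rw [hB i j, hB j i]
  zify at left_ji right_ij left_ij right_ji
  linear_combination left_ji - right_ij + left_ij - right_ji

/-- The exchange matrix of a locally free group species is skew-symmetrizable, with
symmetrizer given by the orders of the groups at the vertices. -/
theorem exchangeMatrix_skew_symmetrizable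
    (K : Type*) [Field K] (I : Type*) [Fintype I]
    (Γ : I → Type*) [∀ i, Group (Γ i)] [∀ i, Fintype (Γ i)]
    -- the bimodules of arrows: finite-dimensional `K`-vector spaces
    (A : I → I → Type*) [∀ i j, AddCommGroup (A i j)] [∀ i j, Module K (A i j)]
    [∀ i j, FiniteDimensional K (A i j)]
    -- left `K[Γ i]`-module structure and right `K[Γ j]`-module structure
    [∀ i j, Module (MonoidAlgebra K (Γ i)) (A i j)]
    [∀ i j, Module (MonoidAlgebra K (Γ j))ᵐᵒᵖ (A i j)]
    [∀ i j, IsScalarTower K (MonoidAlgebra K (Γ i)) (A i j)]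
    [∀ i j, IsScalarTower K (MonoidAlgebra K (Γ j))ᵐᵒᵖ (A i j)]
    -- the two actions commute
    [∀ i j, SMulCommClass (MonoidAlgebra K (Γ i)) (MonoidAlgebra K (Γ j))ᵐᵒᵖ (A i j)]
    -- local freeness: each `A i j` is free of finite rank on both sides
    [∀ i j, Module.Free (MonoidAlgebra K (Γ i)) (A i j)]
    [∀ i j, Module.Finite (MonoidAlgebra K (Γ i)) (A i j)]
    [∀ i j, Module.Free (MonoidAlgebra K (Γ j))ᵐᵒᵖ (A i j)]
    [∀ i j, Module.Finite (MonoidAlgebra K (Γ j))ᵐᵒᵖ (A i j)]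
    -- the exchange matrix
    (B : I → I → ℤ)
    (hB : ∀ i j, B i j = (finrank (MonoidAlgebra K (Γ j)) (A j i) : ℤ)
        - (finrank (MonoidAlgebra K (Γ j))ᵐᵒᵖ (A i j) : ℤ)) :
    ∀ i j, (Fintype.card (Γ j) : ℤ) * B i j = -((Fintype.card (Γ i) : ℤ) * B j i) :=
  exchangeMatrix_skew_symmetrizable_general K I Γ A B hB
end

section
/- Let K be a field, G a finite abelian group whose order is invertible in K, and R = K[G] its group algebra (a commutative K-algebra). Let X and A be finite-dimensional R-modules. Equip the K-linear duals X^* = Hom_K(X, K) and A^* = Hom_K(A, K) with the R-module structure (r·f)(m) = f(r·m). Then the map Φ : X^* ⊗_R A^* → (X ⊗_R A)^* determined by Φ(φ ⊗ ψ)(x ⊗ a) = |G|^{-1} · Σ_{g ∈ G} φ(g·x) · ψ(g^{-1}·a) is a well-defined K-linear isomorphism. -/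
open TensorProduct Module

section DualModule

variable (K : Type*) [Field K] (G : Type*) [CommGroup G] [Fintype G]
variable (X : Type*) [AddCommGroup X] [Module K X] [Module (MonoidAlgebra K G) X]
  [IsScalarTower K (MonoidAlgebra K G) X]

/-- The action of `R = K[G]` on the `K`-linear dual of an `R`-module: `(r • f) x = f (r • x)`
(legitimate since `R` is commutative). -/
noncomputable instance dualSMul : SMul (MonoidAlgebra K G) (Module.Dual K X) :=
  ⟨fun r f => f ∘ₗ DistribMulAction.toLinearMap K X r⟩

lemma dual_smul_apply (r : MonoidAlgebra K G) (f : Module.Dual K X) (x : X) :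
    (r • f) x = f (r • x) := rfl

noncomputable instance dualModule : Module (MonoidAlgebra K G) (Module.Dual K X) where
  one_smul f := LinearMap.ext fun x => by rw [dual_smul_apply, one_smul]
  mul_smul r s f := LinearMap.ext fun x => by
    rw [dual_smul_apply, dual_smul_apply, dual_smul_apply, mul_comm r s, mul_smul]
  smul_zero r := LinearMap.ext fun x => by simp [dual_smul_apply]
  smul_add r f g := LinearMap.ext fun x => by simp [dual_smul_apply]
  add_smul r s f := LinearMap.ext fun x => by
    rw [LinearMap.add_apply, dual_smul_apply, dual_smul_apply, dual_smul_apply, add_smul,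
      map_add]
  zero_smul f := LinearMap.ext fun x => by
    rw [dual_smul_apply, zero_smul, map_zero, LinearMap.zero_apply]

instance : SMulCommClass (MonoidAlgebra K G) K (Module.Dual K X) :=
  ⟨fun r k f => LinearMap.ext fun x => by simp [dual_smul_apply]⟩

end DualModule

/-!
Over `K`, the tensor product `X ⊗_{K[G]} A` is the quotient of `X ⊗_K A` by the relations
`g x ⊗ a = x ⊗ g a`. Since `|G|` is invertible, the quotient map `q` has the `K`-linear section
`s (x ⊗ a) = |G|⁻¹ ∑_g g x ⊗ g⁻¹ a`, so `s ∘ q` is a projection of `X ⊗_K A` onto a copy of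
`X ⊗_{K[G]} A`. Let `q'`, `s'` be the same maps for `X^*` and `A^*`. Because `(g φ) x = φ (g x)`,
the isomorphism `X^* ⊗_K A^* ≅ (X ⊗_K A)^*` carries `s' ∘ q'` to the transpose of `s ∘ q`;
hence `Φ = sᵀ ∘ dualDistrib ∘ s'` has the inverse `q' ∘ dualDistrib⁻¹ ∘ qᵀ`.
-/

namespace TensorProduct

variable {R K M N P : Type*} [CommSemiring R] [CommSemiring K]
  [AddCommMonoid M] [AddCommMonoid N] [AddCommMonoid P]
  [Module R M] [Module R N] [Module K M] [Module K N] [Module K P] [SMulCommClass R K M]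

noncomputable def liftBalanced (f : M →ₗ[K] N →ₗ[K] P)
    (hf : ∀ (r : R) (m : M) (n : N), f (r • m) n = f m (r • n)) : M ⊗[R] N →ₗ[K] P where
  __ := liftAddHom (LinearMap.toAddMonoidHom'.comp f.toAddMonoidHom) hf
  map_smul' k t := by
    induction t with
    | zero => simp
    | tmul m n => rw [smul_tmul']; exact LinearMap.map_smul₂ f k m n
    | add s t hs ht => simp_all

lemma liftBalanced_tmul (f : M →ₗ[K] N →ₗ[K] P) (hf) (m : M) (n : N) :
    liftBalanced f hf (m ⊗ₜ[R] n) = f m n := rfl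

omit [Module K N] in
lemma ext_tmul {f g : M ⊗[R] N →ₗ[K] P} (h : ∀ m n, f (m ⊗ₜ n) = g (m ⊗ₜ n)) : f = g :=
  LinearMap.ext fun t => t.induction_on (by simp only [map_zero]) h
    fun _ _ hs ht => by rw [map_add, map_add, hs, ht]

end TensorProduct

lemma of_smul_tmul_of_inv_smul {k G M N : Type*} [CommSemiring k] [CommGroup G]
    [AddCommMonoid M] [Module (MonoidAlgebra k G) M]
    [AddCommMonoid N] [Module (MonoidAlgebra k G) N] (g : G) (m : M) (n : N) :
    (MonoidAlgebra.of k G g • m) ⊗ₜ[MonoidAlgebra k G] (MonoidAlgebra.of k G g⁻¹ • n) =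
      m ⊗ₜ n := by
  rw [smul_tmul, smul_smul, ← map_mul, mul_inv_cancel, map_one, one_smul]

instance dualIsScalarTower (K : Type*) [Field K] (G : Type*) [CommGroup G]
    (X : Type*) [AddCommGroup X] [Module K X] [Module (MonoidAlgebra K G) X]
    [IsScalarTower K (MonoidAlgebra K G) X] :
    IsScalarTower K (MonoidAlgebra K G) (Dual K X) :=
  ⟨fun k r f => LinearMap.ext fun x => by simp [dual_smul_apply]⟩

section Averaging

variable (K : Type*) [Field K] (G : Type*) [CommGroup G] [Fintype G]
variable (M N : Type*) [AddCommGroup M] [Module K M] [Module (MonoidAlgebra K G) M]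
  [IsScalarTower K (MonoidAlgebra K G) M]
  [AddCommGroup N] [Module K N] [Module (MonoidAlgebra K G) N]
  [IsScalarTower K (MonoidAlgebra K G) N]

noncomputable def averagedTmul : M →ₗ[K] N →ₗ[K] M ⊗[K] N :=
  (Fintype.card G : K)⁻¹ • ∑ g : G, (TensorProduct.mk K M N).compl₁₂
    (DistribSMul.toLinearMap K M (MonoidAlgebra.of K G g))
    (DistribSMul.toLinearMap K N (MonoidAlgebra.of K G g⁻¹))

variable {M N}

lemma averagedTmul_apply (m : M) (n : N) :
    averagedTmul K G M N m n = (Fintype.card G : K)⁻¹ •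
      ∑ g : G, (MonoidAlgebra.of K G g • m) ⊗ₜ (MonoidAlgebra.of K G g⁻¹ • n) := by
  simp [averagedTmul]

lemma averagedTmul_smul_left_eq_smul_right (r : MonoidAlgebra K G) (m : M) (n : N) :
    averagedTmul K G M N (r • m) n = averagedTmul K G M N m (r • n) := by
  induction r using MonoidAlgebra.induction_on with
  | of h =>
    simp only [averagedTmul_apply, smul_smul, ← map_mul]
    congr 1
    exact Fintype.sum_equiv (Equiv.mulRight h) _ _ fun g => by simp [mul_comm]
  | add r s hr hs => rw [add_smul, add_smul, map_add, LinearMap.add_apply, hr, hs, map_add]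
  | smul k r hr => rw [smul_assoc, smul_assoc, LinearMap.map_smul₂, hr, LinearMap.map_smul]

variable (M N)

noncomputable def averagingSection : M ⊗[MonoidAlgebra K G] N →ₗ[K] M ⊗[K] N :=
  liftBalanced (averagedTmul K G M N) (averagedTmul_smul_left_eq_smul_right K G)

noncomputable def averagingProjection : M ⊗[K] N →ₗ[K] M ⊗[K] N :=
  averagingSection K G M N ∘ₗ mapOfCompatibleSMul (MonoidAlgebra K G) K K M N

variable {M N} in
lemma averagingSection_tmul (m : M) (n : N) :
    averagingSection K G M N (m ⊗ₜ n) = averagedTmul K G M N m n :=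
  liftBalanced_tmul _ _ m n

lemma mapOfCompatibleSMul_comp_averagingSection (hG : (Fintype.card G : K) ≠ 0) :
    mapOfCompatibleSMul (MonoidAlgebra K G) K K M N ∘ₗ averagingSection K G M N =
      LinearMap.id := by
  refine ext_tmul fun m n => ?_
  simp only [LinearMap.comp_apply, averagingSection_tmul, averagedTmul_apply, map_smul, map_sum,
    mapOfCompatibleSMul_tmul, of_smul_tmul_of_inv_smul, Finset.sum_const, Finset.card_univ,
    ← Nat.cast_smul_eq_nsmul K, smul_smul, inv_mul_cancel₀ hG, one_smul, LinearMap.id_apply]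

end Averaging

section Duality

variable (K : Type*) [Field K] (G : Type*) [CommGroup G] [Fintype G]
variable (X A : Type*) [AddCommGroup X] [Module K X] [Module (MonoidAlgebra K G) X]
  [IsScalarTower K (MonoidAlgebra K G) X]
  [AddCommGroup A] [Module K A] [Module (MonoidAlgebra K G) A]
  [IsScalarTower K (MonoidAlgebra K G) A]

lemma dualDistrib_comp_averagingProjection :
    dualDistrib K X A ∘ₗ averagingProjection K G (Dual K X) (Dual K A) =
      (averagingProjection K G X A).dualMap ∘ₗ dualDistrib K X A := by
  refine TensorProduct.ext' fun φ ψ => ?_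
  refine TensorProduct.ext' fun x a => ?_
  simp [averagingProjection, averagingSection_tmul, averagedTmul_apply, dual_smul_apply]

noncomputable def dualTensorDualMap :
    Dual K X ⊗[MonoidAlgebra K G] Dual K A →ₗ[K] Dual K (X ⊗[MonoidAlgebra K G] A) :=
  (averagingSection K G X A).dualMap ∘ₗ dualDistrib K X A ∘ₗ
    averagingSection K G (Dual K X) (Dual K A)

variable {G X A} in
lemma dualTensorDualMap_tmul (hG : (Fintype.card G : K) ≠ 0) (φ : Dual K X) (ψ : Dual K A) :
    dualTensorDualMap K G X A (φ ⊗ₜ ψ) =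
      (averagingSection K G X A).dualMap (dualDistrib K X A (φ ⊗ₜ ψ)) := by
  have h := LinearMap.congr_fun (dualDistrib_comp_averagingProjection K G X A) (φ ⊗ₜ ψ)
  simp only [averagingProjection, LinearMap.comp_apply, mapOfCompatibleSMul_tmul] at h
  rw [dualTensorDualMap, LinearMap.comp_apply, LinearMap.comp_apply, h,
    ← LinearMap.comp_apply (averagingSection K G X A).dualMap, LinearMap.dualMap_comp_dualMap,
    LinearMap.comp_assoc, mapOfCompatibleSMul_comp_averagingSection K G X A hG,
    LinearMap.comp_id]

variable [FiniteDimensional K X] [FiniteDimensional K A]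

noncomputable def dualTensorDualInv :
    Dual K (X ⊗[MonoidAlgebra K G] A) →ₗ[K] Dual K X ⊗[MonoidAlgebra K G] Dual K A :=
  mapOfCompatibleSMul (MonoidAlgebra K G) K K (Dual K X) (Dual K A) ∘ₗ
    (dualDistribEquiv K X A).symm.toLinearMap ∘ₗ
    (mapOfCompatibleSMul (MonoidAlgebra K G) K K X A).dualMap

lemma dualTensorDualMap_comp_dualTensorDualInv (hG : (Fintype.card G : K) ≠ 0) :
    dualTensorDualMap K G X A ∘ₗ dualTensorDualInv K G X A = LinearMap.id := by
  have hq := LinearMap.congr_fun (mapOfCompatibleSMul_comp_averagingSection K G X A hG)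
  have hdd : ∀ F, dualDistrib K X A ((dualDistribEquiv K X A).symm F) = F :=
    (dualDistribEquiv K X A).apply_symm_apply
  refine LinearMap.ext fun F => LinearMap.ext fun t => ?_
  have h := LinearMap.congr_fun (dualDistrib_comp_averagingProjection K G X A)
    ((dualDistribEquiv K X A).symm ((mapOfCompatibleSMul (MonoidAlgebra K G) K K X A).dualMap F))
  simp only [averagingProjection, LinearMap.comp_apply, LinearMap.id_apply] at h hq
  simp only [dualTensorDualMap, dualTensorDualInv, LinearMap.comp_apply, LinearEquiv.coe_coe, h,
    hdd, LinearMap.dualMap_apply, hq, LinearMap.id_apply]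

lemma dualTensorDualInv_comp_dualTensorDualMap (hG : (Fintype.card G : K) ≠ 0) :
    dualTensorDualInv K G X A ∘ₗ dualTensorDualMap K G X A = LinearMap.id := by
  have hq := LinearMap.congr_fun
    (mapOfCompatibleSMul_comp_averagingSection K G (Dual K X) (Dual K A) hG)
  have hdd : ∀ u, (dualDistribEquiv K X A).symm (dualDistrib K X A u) = u :=
    (dualDistribEquiv K X A).symm_apply_apply
  refine LinearMap.ext fun t => ?_
  have h := LinearMap.congr_fun (dualDistrib_comp_averagingProjection K G X A)
    (averagingSection K G (Dual K X) (Dual K A) t)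
  simp only [averagingProjection, LinearMap.comp_apply, LinearMap.id_apply] at h hq
  rw [hq] at h
  simp only [dualTensorDualMap, dualTensorDualInv, LinearMap.comp_apply, LinearEquiv.coe_coe,
    LinearMap.id_apply]
  rw [← LinearMap.comp_apply (mapOfCompatibleSMul (MonoidAlgebra K G) K K X A).dualMap,
    LinearMap.dualMap_comp_dualMap, ← h, hdd, hq]

end Duality

theorem dual_tensor_dual_equiv_general (K : Type*) [Field K] (G : Type*) [CommGroup G] [Fintype G]
    (hG : (Fintype.card G : K) ≠ 0)
    (X : Type*) [AddCommGroup X] [Module K X] [Module (MonoidAlgebra K G) X]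
    [IsScalarTower K (MonoidAlgebra K G) X] [FiniteDimensional K X]
    (A : Type*) [AddCommGroup A] [Module K A] [Module (MonoidAlgebra K G) A]
    [IsScalarTower K (MonoidAlgebra K G) A] [FiniteDimensional K A] :
    ∃ Φ : (Module.Dual K X) ⊗[MonoidAlgebra K G] (Module.Dual K A) ≃ₗ[K]
        Module.Dual K (X ⊗[MonoidAlgebra K G] A),
      ∀ (φ : Module.Dual K X) (ψ : Module.Dual K A) (x : X) (a : A),
        Φ (φ ⊗ₜ ψ) (x ⊗ₜ a)
          = (Fintype.card G : K)⁻¹ *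
            ∑ g : G, φ (MonoidAlgebra.of K G g • x) * ψ (MonoidAlgebra.of K G g⁻¹ • a) := by
  refine ⟨.ofLinearMap (dualTensorDualMap K G X A) (dualTensorDualInv K G X A)
    (dualTensorDualMap_comp_dualTensorDualInv K G X A hG)
    (dualTensorDualInv_comp_dualTensorDualMap K G X A hG), fun φ ψ x a => ?_⟩
  simp only [LinearEquiv.coe_ofLinearMap, dualTensorDualMap_tmul K hG, LinearMap.dualMap_apply,
    averagingSection_tmul, averagedTmul_apply, map_smul, map_sum, dualDistrib_apply,
    smul_eq_mul, Finset.mul_sum]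

/-- For a finite abelian group `G` whose order is invertible in `K`, and finite-dimensional
`K[G]`-modules `X` and `A`, the map `φ ⊗ ψ ↦ ((x ⊗ a) ↦ |G|⁻¹ ∑_{g} φ(g•x) ψ(g⁻¹•a))`
is a well-defined `K`-linear isomorphism `X^* ⊗_{K[G]} A^* ≃ (X ⊗_{K[G]} A)^*`. -/
theorem dual_tensor_dual_equiv (K : Type*) [Field K] (G : Type*) [CommGroup G] [Fintype G]
    [DecidableEq G] (hG : (Fintype.card G : K) ≠ 0)
    (X : Type*) [AddCommGroup X] [Module K X] [Module (MonoidAlgebra K G) X]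
    [IsScalarTower K (MonoidAlgebra K G) X] [FiniteDimensional K X]
    (A : Type*) [AddCommGroup A] [Module K A] [Module (MonoidAlgebra K G) A]
    [IsScalarTower K (MonoidAlgebra K G) A] [FiniteDimensional K A] :
    ∃ Φ : (Module.Dual K X) ⊗[MonoidAlgebra K G] (Module.Dual K A) ≃ₗ[K]
        Module.Dual K (X ⊗[MonoidAlgebra K G] A),
      ∀ (φ : Module.Dual K X) (ψ : Module.Dual K A) (x : X) (a : A),
        Φ (φ ⊗ₜ ψ) (x ⊗ₜ a)
          = (Fintype.card G : K)⁻¹ *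
            ∑ g : G, φ (MonoidAlgebra.of K G g • x) * ψ (MonoidAlgebra.of K G g⁻¹ • a) :=
  dual_tensor_dual_equiv_general K G hG X A
end

section
/- Let Γ and Γ' be finite abelian groups with |Γ| = 2·|Γ'|, and let V be a finite-dimensional complex vector space equipped with commuting linear actions of Γ and Γ' (equivalently, a (ℂ[Γ], ℂ[Γ'])-bimodule, all groups being abelian). Suppose V is free of rank 1 as a ℂ[Γ]-module and free of rank 2 as a ℂ[Γ']-module. Then the subspace V^{Γ'} of Γ'-invariant vectors is a 2-dimensional Γ-stable subspace of V which decomposes as a direct sum of two non-isomorphic 1-dimensional representations of Γ. -/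
/-!
Freeness of rank two over `ℂ[Γ']` makes the `Γ'`-invariants `F` a copy of the invariants of
`ℂ[Γ']²`, which are spanned by the norm element `∑ g, g` in each coordinate; so `dim F = 2`, and
`F` is `Γ`-stable because the two actions commute. Inside `ℂ[Γ]`, a subspace on which every
`g` acts by a scalar `c_g` has dimension at most one, because `u(g⁻¹) = c_g u(1)` determines
`u` by `u(1)`; transporting `F` into `ℂ[Γ]` along the rank-one freeness, some `g₀ ∈ Γ` therefore
does not act on `F` as a scalar. Having finite order, `g₀` is semisimple, so `F` splits into two
eigenlines of `g₀` with distinct eigenvalues. They are `Γ`-stable since `Γ` is abelian, and not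
isomorphic since `g₀` acts on them by different scalars.
-/

open Module MonoidAlgebra

section Invariants

variable (k G : Type*) [Field k] [Group G]

noncomputable def invariants (M : Type*) [AddCommGroup M] [Module k M]
    [Module (MonoidAlgebra k G) M] [IsScalarTower k (MonoidAlgebra k G) M] : Submodule k M :=
  (Representation.ofModule' (k := k) (G := G) M).invariants

variable {k G}
variable {M : Type*} [AddCommGroup M] [Module k M] [Module (MonoidAlgebra k G) M]
  [IsScalarTower k (MonoidAlgebra k G) M]

theorem mem_invariants {m : M} : m ∈ invariants k G M ↔ ∀ g : G, of k G g • m = m := Iff.rfl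

theorem smul_mem_invariants {A : Type*} [Monoid A] [DistribMulAction A M]
    [SMulCommClass A (MonoidAlgebra k G) M] (a : A) {m : M} (hm : m ∈ invariants k G M) :
    a • m ∈ invariants k G M :=
  mem_invariants.mpr fun g => by rw [← smul_comm a, mem_invariants.mp hm g]

theorem mem_invariants_pi {ι : Type*} {M : ι → Type*} [∀ i, AddCommGroup (M i)]
    [∀ i, Module k (M i)] [∀ i, Module (MonoidAlgebra k G) (M i)]
    [∀ i, IsScalarTower k (MonoidAlgebra k G) (M i)]
    {m : ∀ i, M i} : m ∈ invariants k G (∀ i, M i) ↔ ∀ i, m i ∈ invariants k G (M i) := by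
  simp only [mem_invariants, funext_iff, Pi.smul_apply]
  exact forall_comm

theorem map_invariants {M' : Type*} [AddCommGroup M'] [Module k M']
    [Module (MonoidAlgebra k G) M'] [IsScalarTower k (MonoidAlgebra k G) M']
    (e : M ≃ₗ[MonoidAlgebra k G] M') :
    (invariants k G M).map (e.restrictScalars k).toLinearMap = invariants k G M' := by
  ext m'
  rw [Submodule.mem_map_equiv, mem_invariants, mem_invariants]
  simp only [LinearEquiv.restrictScalars_symm_apply, ← map_smul, EmbeddingLike.apply_eq_iff_eq]

theorem finrank_invariants_congr {M' : Type*} [AddCommGroup M'] [Module k M']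
    [Module (MonoidAlgebra k G) M'] [IsScalarTower k (MonoidAlgebra k G) M']
    (e : M ≃ₗ[MonoidAlgebra k G] M') :
    finrank k (invariants k G M) = finrank k (invariants k G M') :=
  ((e.restrictScalars k).ofSubmodules _ _ (map_invariants e)).finrank_eq

variable [Fintype G]

theorem invariants_self :
    invariants k G (MonoidAlgebra k G) = k ∙ ∑ g : G, of k G g := by
  apply le_antisymm
  · intro x hx
    refine Submodule.mem_span_singleton.mpr ⟨x.coeff 1, ?_⟩
    ext h
    have := congr_arg (fun y : MonoidAlgebra k G => y.coeff h) (mem_invariants.mp hx h)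
    simp only [of_apply, smul_eq_mul, coeff_single_mul_apply, inv_mul_cancel, one_mul] at this
    simp [this]
  · rw [Submodule.span_singleton_le_iff_mem, mem_invariants]
    intro g
    rw [smul_eq_mul, Finset.mul_sum]
    exact Fintype.sum_equiv (Equiv.mulLeft g) _ _ fun h => (map_mul (of k G) g h).symm

theorem finrank_invariants_pi_self (ι : Type*) [Fintype ι] :
    finrank k (invariants k G (ι → MonoidAlgebra k G)) = Fintype.card ι := by
  let L := (LinearMap.toSpanSingleton k _ (∑ g : G, of k G g)).compLeft ι
  have hL : invariants k G (ι → MonoidAlgebra k G) = LinearMap.range L := by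
    ext m
    simp only [mem_invariants_pi, invariants_self, Submodule.mem_span_singleton,
      LinearMap.mem_range]
    constructor
    · intro h
      choose c hc using h
      exact ⟨c, funext hc⟩
    · rintro ⟨c, rfl⟩ i
      exact ⟨c i, rfl⟩
  have hN : ∑ g : G, of k G g ≠ 0 := fun h => by
    simpa using congr_arg (fun y : MonoidAlgebra k G => y.coeff 1) h
  have hinj : Function.Injective L := fun c d h =>
    funext fun i => smul_left_injective k hN (congr_fun h i)
  rw [hL, LinearMap.finrank_range_of_inj hinj, Module.finrank_fintype_fun_eq_card]

end Invariants

namespace MonoidAlgebra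

variable {k G : Type*} [Field k] [Group G]

theorem finrank_le_one_of_forall_of_mul_eq_smul (p : Submodule k (MonoidAlgebra k G))
    (h : ∀ g : G, ∃ c : k, ∀ u ∈ p, of k G g * u = c • u) : finrank k p ≤ 1 := by
  choose c hc using h
  let φ : p →ₗ[k] k := (Finsupp.lapply 1 ∘ₗ (coeffLinearEquiv k).toLinearMap) ∘ₗ p.subtype
  have hcoeff : ∀ u ∈ p, ∀ g : G, u.coeff g⁻¹ = c g * u.coeff 1 := fun u hu g => by
    simpa using congr_arg (fun y : MonoidAlgebra k G => y.coeff 1) (hc g u hu)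
  have hφ : Function.Injective φ := by
    rw [← LinearMap.ker_eq_bot, Submodule.eq_bot_iff]
    intro u hu
    have hu₁ : (u : MonoidAlgebra k G).coeff 1 = 0 := hu
    ext g
    simpa [hu₁] using hcoeff u u.2 g⁻¹
  simpa using LinearMap.finrank_le_finrank_of_injective hφ

theorem finrank_le_one_of_forall_smul_eq_smul {M : Type*} [AddCommGroup M] [Module k M]
    [Module (MonoidAlgebra k G) M] [IsScalarTower k (MonoidAlgebra k G) M]
    (e : M ≃ₗ[MonoidAlgebra k G] MonoidAlgebra k G) (p : Submodule k M)
    (h : ∀ g : G, ∃ c : k, ∀ u ∈ p, of k G g • u = c • u) : finrank k p ≤ 1 := by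
  rw [← (e.restrictScalars k).finrank_map_eq p]
  refine finrank_le_one_of_forall_of_mul_eq_smul _ fun g => ?_
  obtain ⟨c, hc⟩ := h g
  refine ⟨c, ?_⟩
  rintro _ ⟨u, hu, rfl⟩
  simp only [LinearEquiv.coe_coe, LinearEquiv.restrictScalars_apply, ← smul_eq_mul, ← map_smul,
    hc u hu]
  exact (e.restrictScalars k).map_smul c u

end MonoidAlgebra

namespace Module.End

variable {K V : Type*} [Field K] [AddCommGroup V] [Module K V]

theorem isSemisimple_of_pow_eq_one {f : End K V} {n : ℕ} (hn : (n : K) ≠ 0) (hf : f ^ n = 1) :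
    f.IsSemisimple :=
  isSemisimple_of_squarefree_aeval_eq_zero
    (Polynomial.separable_X_pow_sub_C 1 hn one_ne_zero).squarefree (by simp [hf])

theorem exists_isCompl_eigenspace_of_finrank_eq_two [IsAlgClosed K] {f : End K V}
    (hf : f.IsSemisimple) (hV : finrank K V = 2)
    (hscalar : ∀ c : K, f ≠ algebraMap K (End K V) c) :
    ∃ a b : K, a ≠ b ∧ finrank K (f.eigenspace a) = 1 ∧ finrank K (f.eigenspace b) = 1 ∧
      IsCompl (f.eigenspace a) (f.eigenspace b) := by
  have : FiniteDimensional K V := .of_finrank_pos (by omega)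
  have : Nontrivial V := Module.nontrivial_of_finrank_pos (R := K) (by omega)
  obtain ⟨a, ha⟩ := f.exists_eigenvalue
  have hEa : f.eigenspace a ≠ ⊤ := fun h => hscalar a <| LinearMap.ext fun v => by
    simpa using mem_eigenspace_iff.mp (h ▸ Submodule.mem_top : v ∈ f.eigenspace a)
  obtain ⟨b, hb⟩ : ∃ b, ¬ f.eigenspace b ≤ f.eigenspace a := by
    by_contra! h
    exact hEa (eq_top_iff.mpr (hf.iSup_eigenspace_eq_top ▸ iSup_le h))
  have hab : a ≠ b := by rintro rfl; exact hb le_rfl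
  have hdisj : Disjoint (f.eigenspace a) (f.eigenspace b) :=
    f.eigenspaces_iSupIndep.pairwiseDisjoint hab
  have ha₁ : 1 ≤ finrank K (f.eigenspace a) := Submodule.one_le_finrank_iff.mpr ha
  have hb₁ : 1 ≤ finrank K (f.eigenspace b) :=
    Submodule.one_le_finrank_iff.mpr fun h => hb (h ▸ bot_le)
  have hsum := Submodule.finrank_sup_add_finrank_inf_eq (f.eigenspace a) (f.eigenspace b)
  have hle := Submodule.finrank_le (f.eigenspace a ⊔ f.eigenspace b)
  rw [hdisj.eq_bot, finrank_bot] at hsum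
  refine ⟨a, b, hab, by omega, by omega, hdisj,
    codisjoint_iff.mpr (Submodule.eq_top_of_finrank_eq (by omega))⟩

theorem exists_inf_eigenspace_of_finrank_eq_two [IsAlgClosed K] {f : End K V}
    (hf : f.IsSemisimple) {F : Submodule K V} (hfF : ∀ v ∈ F, f v ∈ F) (hF : finrank K F = 2)
    (hscalar : ∀ c : K, ∃ v ∈ F, f v ≠ c • v) :
    ∃ a b : K, a ≠ b ∧ finrank K ↥(F ⊓ f.eigenspace a) = 1 ∧
      finrank K ↥(F ⊓ f.eigenspace b) = 1 ∧
      (F ⊓ f.eigenspace a) ⊓ (F ⊓ f.eigenspace b) = ⊥ ∧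
      (F ⊓ f.eigenspace a) ⊔ (F ⊓ f.eigenspace b) = F := by
  have hmap (μ : K) : (eigenspace (f.restrict hfF) μ).map F.subtype = F ⊓ f.eigenspace μ := by
    rw [eigenspace, genEigenspace_restrict, Submodule.map_comap_subtype]
  have hS : ∀ c : K, f.restrict hfF ≠ algebraMap K (End K F) c := fun c hc => by
    obtain ⟨v, hv, hfv⟩ := hscalar c
    exact hfv (congr_arg Subtype.val (LinearMap.congr_fun hc ⟨v, hv⟩))
  obtain ⟨a, b, hab, ha, hb, hcompl⟩ :=
    exists_isCompl_eigenspace_of_finrank_eq_two (hf.restrict hfF) hF hS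
  refine ⟨a, b, hab, ?_, ?_, ?_, ?_⟩
  · rw [← hmap, Submodule.finrank_map_subtype_eq, ha]
  · rw [← hmap, Submodule.finrank_map_subtype_eq, hb]
  · rw [← hmap, ← hmap, ← Submodule.map_inf _ F.injective_subtype, hcompl.inf_eq_bot,
      Submodule.map_bot]
  · rw [← hmap, ← hmap, ← Submodule.map_sup, hcompl.sup_eq_top, Submodule.map_top,
      Submodule.range_subtype]

theorem not_intertwines_of_le_eigenspace {f : End K V} {a b : K} (hab : a ≠ b)
    {W₁ W₂ : Submodule K V} (h₁ : W₁ ≤ f.eigenspace a) (h₂ : W₂ ≤ f.eigenspace b)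
    (hW₁ : W₁ ≠ ⊥) (e : W₁ ≃ₗ[K] W₂) :
    ¬ ∀ (v : V) (hv : v ∈ W₁) (hfv : f v ∈ W₁), (e ⟨f v, hfv⟩ : V) = f (e ⟨v, hv⟩) := by
  intro he
  obtain ⟨v, hv, hv0⟩ := Submodule.exists_mem_ne_zero_of_ne_bot hW₁
  have hfv : f v = a • v := mem_eigenspace_iff.mp (h₁ hv)
  have hfv' : f v ∈ W₁ := hfv ▸ W₁.smul_mem a hv
  have hw : (e ⟨v, hv⟩ : V) ≠ 0 := by simpa using hv0
  have key := he v hv hfv'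
  rw [show (⟨f v, hfv'⟩ : W₁) = a • ⟨v, hv⟩ from Subtype.ext hfv, map_smul,
    mem_eigenspace_iff.mp (h₂ (e ⟨v, hv⟩).2)] at key
  exact hab (smul_left_injective K hw key)

end Module.End

theorem invariants_decompose_general (Γ Γ' : Type*) [CommGroup Γ] [CommGroup Γ']
    [Fintype Γ] [Fintype Γ']
    (V : Type*) [AddCommGroup V] [Module ℂ V]
    [Module (MonoidAlgebra ℂ Γ) V] [Module (MonoidAlgebra ℂ Γ') V]
    [IsScalarTower ℂ (MonoidAlgebra ℂ Γ) V] [IsScalarTower ℂ (MonoidAlgebra ℂ Γ') V]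
    [SMulCommClass (MonoidAlgebra ℂ Γ) (MonoidAlgebra ℂ Γ') V]
    (hfree1 : Nonempty (V ≃ₗ[MonoidAlgebra ℂ Γ] MonoidAlgebra ℂ Γ))
    (hfree2 : Nonempty (V ≃ₗ[MonoidAlgebra ℂ Γ'] (Fin 2 → MonoidAlgebra ℂ Γ'))) :
    ∃ F : Submodule ℂ V,
      -- `F` is the subspace of `Γ'`-invariant vectors
      (∀ v : V, v ∈ F ↔ ∀ g : Γ', MonoidAlgebra.of ℂ Γ' g • v = v) ∧
      -- it is 2-dimensional
      finrank ℂ F = 2 ∧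
      -- it is `Γ`-stable
      (∀ (g : Γ), ∀ v ∈ F, MonoidAlgebra.of ℂ Γ g • v ∈ F) ∧
      -- and it decomposes as the direct sum of two non-isomorphic one-dimensional
      -- representations of `Γ`
      ∃ W₁ W₂ : Submodule ℂ V,
        W₁ ≤ F ∧ W₂ ≤ F ∧
        (∀ (g : Γ), ∀ v ∈ W₁, MonoidAlgebra.of ℂ Γ g • v ∈ W₁) ∧
        (∀ (g : Γ), ∀ v ∈ W₂, MonoidAlgebra.of ℂ Γ g • v ∈ W₂) ∧
        finrank ℂ W₁ = 1 ∧ finrank ℂ W₂ = 1 ∧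
        W₁ ⊓ W₂ = ⊥ ∧ W₁ ⊔ W₂ = F ∧
        -- non-isomorphic as representations of `Γ`: there is no `ℂ`-linear equivalence
        -- `W₁ ≃ W₂` commuting with the `Γ`-action
        ¬ ∃ e : W₁ ≃ₗ[ℂ] W₂, ∀ (g : Γ) (v : V) (hv : v ∈ W₁)
            (hgv : MonoidAlgebra.of ℂ Γ g • v ∈ W₁),
            ((e ⟨MonoidAlgebra.of ℂ Γ g • v, hgv⟩ : W₂) : V)
              = MonoidAlgebra.of ℂ Γ g • ((e ⟨v, hv⟩ : W₂) : V) := by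
  obtain ⟨e₁⟩ := hfree1
  obtain ⟨e₂⟩ := hfree2
  set F := invariants ℂ Γ' V
  have hF : finrank ℂ F = 2 := by
    rw [finrank_invariants_congr e₂, finrank_invariants_pi_self, Fintype.card_fin]
  have hFΓ : ∀ g : Γ, ∀ v ∈ F, of ℂ Γ g • v ∈ F := fun g _ hv => smul_mem_invariants _ hv
  obtain ⟨g₀, hg₀⟩ : ∃ g₀ : Γ, ∀ c : ℂ, ∃ v ∈ F, of ℂ Γ g₀ • v ≠ c • v := by
    by_contra! h
    have := finrank_le_one_of_forall_smul_eq_smul e₁ F h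
    omega
  let ρ := Algebra.lsmul ℂ ℂ (A := MonoidAlgebra ℂ Γ) V
  have hss : (ρ (of ℂ Γ g₀)).IsSemisimple :=
    End.isSemisimple_of_pow_eq_one (n := Fintype.card Γ) (by simp)
      (by rw [← map_pow, ← map_pow, pow_card_eq_one, map_one, map_one])
  obtain ⟨a, b, hab, ha, hb, hinf, hsup⟩ :=
    End.exists_inf_eigenspace_of_finrank_eq_two hss (hFΓ g₀) hF hg₀
  have hstable (μ : ℂ) (g : Γ) (v : V) (hv : v ∈ F ⊓ (ρ (of ℂ Γ g₀)).eigenspace μ) :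
      of ℂ Γ g • v ∈ F ⊓ (ρ (of ℂ Γ g₀)).eigenspace μ :=
    ⟨hFΓ g v hv.1, End.mapsTo_genEigenspace_of_comm ((Commute.all _ _).map ρ) μ 1 hv.2⟩
  refine ⟨F, fun v => mem_invariants, hF, hFΓ, _, _, inf_le_left, inf_le_left, hstable a,
    hstable b, ha, hb, hinf, hsup, ?_⟩
  rintro ⟨e, he⟩
  exact End.not_intertwines_of_le_eigenspace hab inf_le_right inf_le_right
    (fun h => by rw [h, finrank_bot] at ha; exact zero_ne_one ha) e (he g₀)

/-- Let `Γ`, `Γ'` be finite abelian groups with `|Γ| = 2|Γ'|`, and `V` a finite-dimensional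
complex vector space with commuting linear actions of `Γ` and `Γ'` which is free of rank 1
over `ℂ[Γ]` and free of rank 2 over `ℂ[Γ']`. Then the subspace of `Γ'`-invariants is a
2-dimensional `Γ`-stable subspace which is the direct sum of two non-isomorphic
1-dimensional representations of `Γ`. -/
theorem invariants_decompose (Γ Γ' : Type*) [CommGroup Γ] [CommGroup Γ']
    [Fintype Γ] [Fintype Γ'] (hcard : Fintype.card Γ = 2 * Fintype.card Γ')
    (V : Type*) [AddCommGroup V] [Module ℂ V] [FiniteDimensional ℂ V]
    [Module (MonoidAlgebra ℂ Γ) V] [Module (MonoidAlgebra ℂ Γ') V]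
    [IsScalarTower ℂ (MonoidAlgebra ℂ Γ) V] [IsScalarTower ℂ (MonoidAlgebra ℂ Γ') V]
    [SMulCommClass (MonoidAlgebra ℂ Γ) (MonoidAlgebra ℂ Γ') V]
    (hfree1 : Nonempty (V ≃ₗ[MonoidAlgebra ℂ Γ] MonoidAlgebra ℂ Γ))
    (hfree2 : Nonempty (V ≃ₗ[MonoidAlgebra ℂ Γ'] (Fin 2 → MonoidAlgebra ℂ Γ'))) :
    ∃ F : Submodule ℂ V,
      -- `F` is the subspace of `Γ'`-invariant vectors
      (∀ v : V, v ∈ F ↔ ∀ g : Γ', MonoidAlgebra.of ℂ Γ' g • v = v) ∧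
      -- it is 2-dimensional
      finrank ℂ F = 2 ∧
      -- it is `Γ`-stable
      (∀ (g : Γ), ∀ v ∈ F, MonoidAlgebra.of ℂ Γ g • v ∈ F) ∧
      -- and it decomposes as the direct sum of two non-isomorphic one-dimensional
      -- representations of `Γ`
      ∃ W₁ W₂ : Submodule ℂ V,
        W₁ ≤ F ∧ W₂ ≤ F ∧
        (∀ (g : Γ), ∀ v ∈ W₁, MonoidAlgebra.of ℂ Γ g • v ∈ W₁) ∧
        (∀ (g : Γ), ∀ v ∈ W₂, MonoidAlgebra.of ℂ Γ g • v ∈ W₂) ∧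
        finrank ℂ W₁ = 1 ∧ finrank ℂ W₂ = 1 ∧
        W₁ ⊓ W₂ = ⊥ ∧ W₁ ⊔ W₂ = F ∧
        -- non-isomorphic as representations of `Γ`: there is no `ℂ`-linear equivalence
        -- `W₁ ≃ W₂` commuting with the `Γ`-action
        ¬ ∃ e : W₁ ≃ₗ[ℂ] W₂, ∀ (g : Γ) (v : V) (hv : v ∈ W₁)
            (hgv : MonoidAlgebra.of ℂ Γ g • v ∈ W₁),
            ((e ⟨MonoidAlgebra.of ℂ Γ g • v, hgv⟩ : W₂) : V)
              = MonoidAlgebra.of ℂ Γ g • ((e ⟨v, hv⟩ : W₂) : V) :=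
  invariants_decompose_general Γ Γ' V hfree1 hfree2
end

section
/- Let n be a positive integer, and let Γ_1 and Γ_2 be finite abelian groups of order 2n and Γ_6 a finite abelian group of order n. Let A be a complex vector space carrying commuting linear actions of Γ_1 and Γ_6 such that A is free of rank 1 as a ℂ[Γ_1]-module and free of rank 2 as a ℂ[Γ_6]-module, and let B be a complex vector space carrying commuting linear actions of Γ_6 and Γ_2 such that B is free of rank 2 as a ℂ[Γ_6]-module and free of rank 1 as a ℂ[Γ_2]-module. Consider T = A ⊗_{ℂ[Γ_6]} B, equipped with the actions of Γ_1 (through A) and Γ_2 (through B). Then there is no complex vector space M with commuting actions of Γ_1 and Γ_2 such that T is isomorphic to M ⊕ M via a ℂ-linear isomorphism commuting with both the Γ_1-action and the Γ_2-action. -/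
/-
The actions of `Γ₁` and `Γ₂` on `T = A ⊗_{ℂ[Γ₆]} B` commute, and `T` is cyclic for them: since
`A ≅ ℂ[Γ₁]` and `B ≅ ℂ[Γ₂]`, the translates of `a₀ ⊗ b₀` span `T` over `ℂ`, where `a₀`, `b₀` are the
generators. An equivariant `T ≅ M ⊕ M` makes `M ⊕ M` cyclic, generated by some `(m, m')`. Then `m`
generates `M`, so `m' = D m` for an operator `D` in the commutative algebra spanned by the action;
all translates of `(m, m')` lie in the graph of `D`, which is all of `M ⊕ M` only if `M = 0`.
But `T ≠ 0`, because `A` is free of rank 2 over `ℂ[Γ₆]` and `B ≠ 0`.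
-/

open TensorProduct

section

variable (Γ₁ Γ₂ Γ₆ : Type*) [CommGroup Γ₁] [CommGroup Γ₂] [CommGroup Γ₆]
variable (A : Type*) [AddCommGroup A] [Module ℂ A]
  [Module (MonoidAlgebra ℂ Γ₆) A] [Module (MonoidAlgebra ℂ Γ₁) A]
  [IsScalarTower ℂ (MonoidAlgebra ℂ Γ₆) A] [IsScalarTower ℂ (MonoidAlgebra ℂ Γ₁) A]
  [SMulCommClass (MonoidAlgebra ℂ Γ₁) (MonoidAlgebra ℂ Γ₆) A]
variable (B : Type*) [AddCommGroup B] [Module ℂ B]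
  [Module (MonoidAlgebra ℂ Γ₆) B] [Module (MonoidAlgebra ℂ Γ₂) B]
  [IsScalarTower ℂ (MonoidAlgebra ℂ Γ₆) B] [IsScalarTower ℂ (MonoidAlgebra ℂ Γ₂) B]
  [SMulCommClass (MonoidAlgebra ℂ Γ₂) (MonoidAlgebra ℂ Γ₆) B]

noncomputable def actA (g : Γ₁) : A →ₗ[MonoidAlgebra ℂ Γ₆] A where
  toFun a := MonoidAlgebra.of ℂ Γ₁ g • a
  map_add' := smul_add _
  map_smul' r a := smul_comm (MonoidAlgebra.of ℂ Γ₁ g) r a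

noncomputable def actB (g : Γ₂) : B →ₗ[MonoidAlgebra ℂ Γ₆] B where
  toFun b := MonoidAlgebra.of ℂ Γ₂ g • b
  map_add' := smul_add _
  map_smul' r b := smul_comm (MonoidAlgebra.of ℂ Γ₂ g) r b

theorem subsingleton_of_span_range_prod_eq_top {R G M : Type*} [CommRing R] [CommMonoid G]
    [AddCommGroup M] [Module R M] (ρ : G →* Module.End R M) {m m' : M}
    (h : Submodule.span R (Set.range fun g => (ρ g m, ρ g m')) = ⊤) : Subsingleton M := by
  have hm : Submodule.span R (Set.range fun g => ρ g m) = ⊤ := by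
    have := congrArg (Submodule.map (LinearMap.fst R M M)) h
    rw [Submodule.map_span, ← Set.range_comp, Submodule.map_top,
      LinearMap.range_eq_top.2 LinearMap.fst_surjective] at this
    exact this
  obtain ⟨c, hc⟩ := Finsupp.mem_span_range_iff_exists_finsupp.1 (hm ▸ Submodule.mem_top : m' ∈ _)
  set D : Module.End R M := c.sum fun g a => a • ρ g
  have hDm : D m = m' := by simp [D, Finsupp.sum, ← hc, LinearMap.sum_apply]
  have hD : ∀ g, Commute (ρ g) D := fun g =>
    Commute.sum_right _ _ _ fun h _ => ((Commute.all g h).map ρ).smul_right _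
  have hgraph : ⊤ ≤ D.graph := by
    rw [← h, Submodule.span_le]
    rintro _ ⟨g, rfl⟩
    rw [SetLike.mem_coe, LinearMap.mem_graph_iff, ← hDm, ← Module.End.mul_apply, ← (hD g).eq]
    rfl
  refine subsingleton_of_forall_eq 0 fun x => ?_
  simpa using (D.mem_graph_iff (0, x)).1 (hgraph trivial)

theorem TensorProduct.span_range_tmul_eq_top_of_span_eq_top {R S M N ι κ : Type*}
    [CommSemiring R] [CommSemiring S] [Algebra R S]
    [AddCommMonoid M] [Module R M] [Module S M] [IsScalarTower R S M]
    [AddCommMonoid N] [Module R N] [Module S N] [IsScalarTower R S N]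
    {x : ι → M} {y : κ → N} (hx : Submodule.span R (Set.range x) = ⊤)
    (hy : Submodule.span R (Set.range y) = ⊤) :
    Submodule.span R (Set.range fun p : ι × κ => x p.1 ⊗ₜ[S] y p.2) = ⊤ := by
  rw [eq_top_iff]
  intro t _
  induction t using TensorProduct.induction_on with
  | zero => exact zero_mem _
  | add t u ht hu => exact add_mem (ht trivial) (hu trivial)
  | tmul a b =>
    have hab := Submodule.apply_mem_map₂ ((TensorProduct.mk S M N).restrictScalars₁₂ R R)
      (hx ▸ Submodule.mem_top : a ∈ _) (hy ▸ Submodule.mem_top : b ∈ _)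
    rwa [Submodule.map₂_span_span, Set.image2_range] at hab

theorem span_range_of_smul_symm_one_eq_top {k G N : Type*} [CommSemiring k] [Monoid G]
    [AddCommMonoid N] [Module k N] [Module (MonoidAlgebra k G) N]
    [IsScalarTower k (MonoidAlgebra k G) N] (e : N ≃ₗ[MonoidAlgebra k G] MonoidAlgebra k G) :
    Submodule.span k (Set.range fun g : G => MonoidAlgebra.of k G g • e.symm 1) = ⊤ := by
  have he : (fun g : G => MonoidAlgebra.of k G g • e.symm 1) =
      (e.restrictScalars k).symm ∘ MonoidAlgebra.basis G k := by
    ext g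
    simp [MonoidAlgebra.basis_apply, ← map_smul]
  rw [he, Set.range_comp, ← LinearEquiv.coe_toLinearMap, Submodule.span_image,
    (MonoidAlgebra.basis G k).span_eq, Submodule.map_top, LinearEquiv.range]

theorem tensor_not_doubled
    (hA₁ : Nonempty (A ≃ₗ[MonoidAlgebra ℂ Γ₁] MonoidAlgebra ℂ Γ₁))
    (hA₆ : Nonempty (A ≃ₗ[MonoidAlgebra ℂ Γ₆] (Fin 2 → MonoidAlgebra ℂ Γ₆)))
    (hB₂ : Nonempty (B ≃ₗ[MonoidAlgebra ℂ Γ₂] MonoidAlgebra ℂ Γ₂)) :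
    ∀ (M : Type*) [AddCommGroup M] [Module ℂ M],
      ∀ (ρ₁ : Γ₁ →* (M ≃ₗ[ℂ] M)) (ρ₂ : Γ₂ →* (M ≃ₗ[ℂ] M)),
        (∀ (g₁ : Γ₁) (g₂ : Γ₂) (m : M), ρ₁ g₁ (ρ₂ g₂ m) = ρ₂ g₂ (ρ₁ g₁ m)) →
        ∀ e : (A ⊗[MonoidAlgebra ℂ Γ₆] B) ≃ₗ[ℂ] M × M,
          ¬ ((∀ (g : Γ₁) (t : A ⊗[MonoidAlgebra ℂ Γ₆] B),
                e (LinearMap.rTensor B (actA Γ₁ Γ₆ A g) t)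
                  = (ρ₁ g (e t).1, ρ₁ g (e t).2)) ∧
             (∀ (g : Γ₂) (t : A ⊗[MonoidAlgebra ℂ Γ₆] B),
                e (LinearMap.lTensor A (actB Γ₂ Γ₆ B g) t)
                  = (ρ₂ g (e t).1, ρ₂ g (e t).2))) := by
  intro M _ _ ρ₁ ρ₂ hρ e ⟨he₁, he₂⟩
  obtain ⟨eA⟩ := hA₁
  obtain ⟨eA₆⟩ := hA₆
  obtain ⟨eB⟩ := hB₂
  let ρ : Γ₁ × Γ₂ →* Module.End ℂ M :=
    LinearEquiv.automorphismGroup.toLinearMapMonoidHom.comp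
      (ρ₁.noncommCoprod ρ₂ fun g₁ g₂ => LinearEquiv.ext (hρ g₁ g₂))
  let v : A ⊗[MonoidAlgebra ℂ Γ₆] B := eA.symm 1 ⊗ₜ eB.symm 1
  have hcyclic := span_range_tmul_eq_top_of_span_eq_top (S := MonoidAlgebra ℂ Γ₆)
    (span_range_of_smul_symm_one_eq_top eA) (span_range_of_smul_symm_one_eq_top eB)
  have hequiv : ∀ g : Γ₁ × Γ₂, e ((MonoidAlgebra.of ℂ Γ₁ g.1 • eA.symm 1) ⊗ₜ[MonoidAlgebra ℂ Γ₆]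
      (MonoidAlgebra.of ℂ Γ₂ g.2 • eB.symm 1)) = (ρ g (e v).1, ρ g (e v).2) := fun g => by
    have h := he₁ g.1 (LinearMap.lTensor A (actB Γ₂ Γ₆ B g.2) v)
    rw [he₂] at h
    exact h
  have : Subsingleton M := by
    refine subsingleton_of_span_range_prod_eq_top ρ (m := (e v).1) (m' := (e v).2) ?_
    rw [← funext hequiv, Set.range_comp', ← LinearEquiv.coe_toLinearMap, Submodule.span_image,
      hcyclic, Submodule.map_top, LinearEquiv.range]
  -- free nonzero modules are faithfully flat, which makes `A ⊗ B` nontrivial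
  have : Module.Free (MonoidAlgebra ℂ Γ₆) A := .of_equiv eA₆.symm
  have : Nontrivial A := eA₆.toEquiv.nontrivial
  have : Nontrivial B := eB.toEquiv.nontrivial
  exact not_subsingleton (A ⊗[MonoidAlgebra ℂ Γ₆] B) e.toEquiv.subsingleton

end
end
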